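/- arXiv:1805.07217 — 4 statements merged into one kernel-verified Lean document; each statement's English description precedes it below -/
import Mathlib

section
/- Let t = (−1 + √3 + √(−5 + 4√3))/3. Then t satisfies the quadratic equation (1 − cos(4π/3))(1 − cos(π/3))t² + (cos(5π/6) + cos(4π/3 + π/3) − cos(4π/3) − cos(π/3))t + (cos(5π/6) − sin(4π/3)sin(π/3)) = 0, and 0 < t < 1. -/
/-!
At these angles every cosine and sine is `±1/2` or `±√3/2`, so the equation becomes, after
multiplying by `4`, the quadratic `3 t² + 2 (1 - √3) t + (3 - 2√3) = 0`. Its discriminant is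
`4 (4√3 - 5)`, and `t` is its larger root. The bounds follow from `1.7 < √3 < 1.8`, which give
`0 ≤ 4√3 - 5 < 4`.
-/

open Real

lemma cos_four_pi_div_three : cos (4 * π / 3) = -(1 / 2) := by
  rw [show 4 * π / 3 = π / 3 + π by ring, cos_add_pi, cos_pi_div_three]

lemma sin_four_pi_div_three : sin (4 * π / 3) = -(√3 / 2) := by
  rw [show 4 * π / 3 = π / 3 + π by ring, sin_add_pi, sin_pi_div_three]

lemma cos_five_pi_div_three : cos (5 * π / 3) = 1 / 2 := by
  rw [show 5 * π / 3 = -(π / 3) + 2 * π by ring, cos_add_two_pi, cos_neg, cos_pi_div_three]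

lemma cos_five_pi_div_six : cos (5 * π / 6) = -(√3 / 2) := by
  rw [show 5 * π / 6 = π - π / 6 by ring, cos_pi_sub, cos_pi_div_six]

lemma sqrt_three_mem_Ioo : √3 ∈ Set.Ioo (1.7 : ℝ) 1.8 := by
  have h3 : √3 ^ 2 = 3 := sq_sqrt (by norm_num)
  constructor <;> nlinarith [sqrt_nonneg 3]

lemma sq_sqrt_neg_five_add_four_mul_sqrt_three :
    √(-5 + 4 * √3) ^ 2 = -5 + 4 * √3 :=
  sq_sqrt (by linarith [sqrt_three_mem_Ioo.1])

lemma sqrt_neg_five_add_four_mul_sqrt_three_lt_two : √(-5 + 4 * √3) < 2 := by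
  rw [sqrt_lt' two_pos]
  linarith [sqrt_three_mem_Ioo.2]

/-- The paper's `t = cos a`, where `a` is the edge length of the pentagon. -/
noncomputable def edgeCos : ℝ := (-1 + √3 + √(-5 + 4 * √3)) / 3

lemma edgeCos_quadratic :
    3 * (edgeCos * edgeCos) + 2 * (1 - √3) * edgeCos + (3 - 2 * √3) = 0 := by
  have hdiscrim : discrim 3 (2 * (1 - √3)) (3 - 2 * √3)
      = (2 * √(-5 + 4 * √3)) * (2 * √(-5 + 4 * √3)) := by
    have h3 : √3 ^ 2 = 3 := sq_sqrt (by norm_num)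
    rw [discrim]
    linear_combination 4 * h3 - 4 * sq_sqrt_neg_five_add_four_mul_sqrt_three
  refine (quadratic_eq_zero_iff three_ne_zero hdiscrim edgeCos).2 (Or.inl ?_)
  rw [edgeCos]
  ring

lemma edgeCos_pos : 0 < edgeCos := by
  rw [edgeCos]
  linarith [sqrt_three_mem_Ioo.1, sqrt_nonneg (-5 + 4 * √3)]

lemma edgeCos_lt_one : edgeCos < 1 := by
  rw [edgeCos]
  linarith [sqrt_three_mem_Ioo.2, sqrt_neg_five_add_four_mul_sqrt_three_lt_two]

theorem stmt_5 :
    let t : ℝ := (-1 + Real.sqrt 3 + Real.sqrt (-5 + 4 * Real.sqrt 3)) / 3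
    (1 - Real.cos (4 * π / 3)) * (1 - Real.cos (π / 3)) * t ^ 2
      + (Real.cos (5 * π / 6) + Real.cos (4 * π / 3 + π / 3)
        - Real.cos (4 * π / 3) - Real.cos (π / 3)) * t
      + (Real.cos (5 * π / 6) - Real.sin (4 * π / 3) * Real.sin (π / 3)) = 0
    ∧ 0 < t ∧ t < 1 := by
  intro t
  rw [show t = edgeCos from rfl]
  refine ⟨?_, edgeCos_pos, edgeCos_lt_one⟩
  rw [show 4 * π / 3 + π / 3 = 5 * π / 3 by ring, cos_four_pi_div_three, sin_four_pi_div_three,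
    cos_five_pi_div_three, cos_five_pi_div_six, cos_pi_div_three, sin_pi_div_three]
  have h3 : √3 * √3 = 3 := mul_self_sqrt (by norm_num)
  linear_combination (1 / 4) * edgeCos_quadratic + (1 / 4) * h3
end

section
/- If a ∈ (0, π/2) satisfies (sec a · cot(π/6)) · (sec a · cot(5π/12)) = 1, then cos a = √(−3 + 2√3). -/
/-! Writing `δ = π/3`, `ε = 5π/6`, the half-angle cotangents are `cot (π/6) = √3` and
`cot (5π/12) = 2 - √3`, so the condition reads `sec² a · √3 (2 - √3) = 1`, i.e.
`cos² a = 2√3 - 3`; positivity of `cos a` on `(0, π/2)` picks the positive root. -/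

open Real

theorem cos_div_sin_pi_div_six : cos (π / 6) / sin (π / 6) = √3 := by
  rw [cos_pi_div_six, sin_pi_div_six]
  ring

theorem cos_div_sin_five_pi_div_twelve : cos (5 * π / 12) / sin (5 * π / 12) = 2 - √3 := by
  have hsum : 5 * π / 12 = π / 4 + π / 6 := by ring
  have hcos : cos (5 * π / 12) = √2 * (√3 - 1) / 4 := by
    rw [hsum, cos_add, cos_pi_div_four, sin_pi_div_four, cos_pi_div_six, sin_pi_div_six]
    ring
  have hsin : sin (5 * π / 12) = √2 * (√3 + 1) / 4 := by
    rw [hsum, sin_add, cos_pi_div_four, sin_pi_div_four, cos_pi_div_six, sin_pi_div_six]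
    ring
  have h3 : √3 ^ 2 = 3 := sq_sqrt (by norm_num)
  rw [hcos, hsin, div_eq_iff (by positivity)]
  linear_combination (√2 / 4) * h3

theorem eq_sqrt_mul_of_one_div_mul_mul_one_div_mul_eq_one {c p q : ℝ} (hc : 0 < c)
    (h : (1 / c * p) * (1 / c * q) = 1) : c = √(p * q) := by
  have hsq : c ^ 2 = p * q := by
    field_simp at h
    linarith
  rw [← hsq, sqrt_sq hc.le]

theorem stmt_7 (a : ℝ) (ha : a ∈ Set.Ioo 0 (π / 2))
    (h : ((1 / Real.cos a) * (Real.cos (π / 6) / Real.sin (π / 6)))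
        * ((1 / Real.cos a) * (Real.cos (5 * π / 12) / Real.sin (5 * π / 12))) = 1) :
    Real.cos a = Real.sqrt (-3 + 2 * Real.sqrt 3) := by
  have hcos : 0 < cos a := cos_pos_of_mem_Ioo ⟨by linarith [ha.1, pi_pos], ha.2⟩
  rw [cos_div_sin_pi_div_six, cos_div_sin_five_pi_div_twelve] at h
  rw [eq_sqrt_mul_of_one_div_mul_mul_one_div_mul_eq_one hcos h]
  congr 1
  linear_combination -sq_sqrt (show (0 : ℝ) ≤ 3 by norm_num)
end

section
/- Let α = arctan((4 + 3√3 − 2√(−5+4√3) + 4√3·√(−5+4√3))/33) and γ = π − arctan((12 + 7√3 + 6√(−5+4√3) + 4√3·√(−5+4√3))/3). Then tan(α + γ) = −√3. -/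
/-! Since `γ = π - arctan b`, `tan (α + γ) = tan (arctan a - arctan b) = (a - b) / (1 + a b)`, and
with `r = √3`, `s = √(4√3 - 5)` the numbers `a`, `b` satisfy `a - b = -r (1 + a b)` as a consequence
of `r² = 3` and `s² = 4r - 5` alone. -/

open Real

namespace Real

theorem tan_arctan_sub_arctan {a b : ℝ} (h : 1 + a * b ≠ 0) :
    tan (arctan a - arctan b) = (a - b) / (1 + a * b) := by
  have ha : 0 < √(1 + a ^ 2) := sqrt_pos.mpr (by positivity)
  have hb : 0 < √(1 + b ^ 2) := sqrt_pos.mpr (by positivity)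
  rw [tan_eq_sin_div_cos, sin_sub, cos_sub, sin_arctan, sin_arctan, cos_arctan, cos_arctan]
  field_simp

/-- `1 + a b` cannot vanish here: it would force `a = b` and then `1 + a² = 0`. -/
theorem tan_arctan_sub_arctan_eq {a b c : ℝ} (h : a - b = c * (1 + a * b)) :
    tan (arctan a - arctan b) = c := by
  have hden : 1 + a * b ≠ 0 := by
    intro h0
    have hab : a = b := by linear_combination h + c * h0
    nlinarith [sq_nonneg a, hab ▸ h0]
  rw [tan_arctan_sub_arctan hden, h, mul_div_cancel_right₀ _ hden]

end Real

theorem sub_eq_neg_mul_one_add_mul_of_sq_eq {K : Type*} [Field K] [CharZero K] {r s : K}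
    (hr : r ^ 2 = 3) (hs : s ^ 2 = -5 + 4 * r) :
    (4 + 3 * r - 2 * s + 4 * r * s) / 33 - (12 + 7 * r + 6 * s + 4 * r * s) / 3
      = -r * (1 + (4 + 3 * r - 2 * s + 4 * r * s) / 33 * ((12 + 7 * r + 6 * s + 4 * r * s) / 3)) := by
  field_simp
  linear_combination (16 * r ^ 3 + 16 * r ^ 2 - 12 * r) * hs
    + (64 * r ^ 2 + 40 * r * s + 5 * r + 68 * s + 128) * hr

theorem stmt_8 :
    let α : ℝ := Real.arctan ((4 + 3 * Real.sqrt 3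
      - 2 * Real.sqrt (-5 + 4 * Real.sqrt 3)
      + 4 * Real.sqrt 3 * Real.sqrt (-5 + 4 * Real.sqrt 3)) / 33)
    let γ : ℝ := π - Real.arctan ((12 + 7 * Real.sqrt 3
      + 6 * Real.sqrt (-5 + 4 * Real.sqrt 3)
      + 4 * Real.sqrt 3 * Real.sqrt (-5 + 4 * Real.sqrt 3)) / 3)
    Real.tan (α + γ) = -Real.sqrt 3 := by
  intro α γ
  have hr : √3 ^ 2 = 3 := sq_sqrt (by norm_num)
  have hs : √(-5 + 4 * √3) ^ 2 = -5 + 4 * √3 :=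
    sq_sqrt (by nlinarith [sqrt_nonneg 3])
  show tan (arctan _ + (π - arctan _)) = -√3
  rw [← add_sub_assoc, add_sub_right_comm, tan_add_pi]
  exact tan_arctan_sub_arctan_eq (sub_eq_neg_mul_one_add_mul_of_sq_eq hr hs)
end

section
/- The quartic polynomial 49t⁴ + (16−18√2)t³ + (48−54√2)t² + (52−34√2)t + 43−30√2 has exactly four real roots, and its largest real root t satisfies 0.779 < t < 0.780. -/
/-!
The four roots are located by sign changes of the quartic at `-1, -1/2, 0, 1/2` and
`0.779, 0.780`; at each of these points the value has the form `A - B √2` with rational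
`A, B`, so its sign follows from `1.41421 < √2 < 1.41422`. A quartic has at most four roots,
so there are no others.
-/

open Polynomial

theorem exists_mem_Ioo_eq_zero_of_mul_neg {f : ℝ → ℝ} (hf : Continuous f) {a b : ℝ}
    (hab : a < b) (hsign : f a * f b < 0) : ∃ x ∈ Set.Ioo a b, f x = 0 := by
  rcases mul_neg_iff.1 hsign with ⟨ha, hb⟩ | ⟨ha, hb⟩
  · exact intermediate_value_Ioo' hab.le hf.continuousOn ⟨hb, ha⟩
  · exact intermediate_value_Ioo hab.le hf.continuousOn ⟨ha, hb⟩

theorem Polynomial.mem_of_isRoot_of_natDegree_le_card {R : Type*} [CommRing R] [IsDomain R]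
    {p : R[X]} (hp : p ≠ 0) {s : Finset R} (hs : ∀ x ∈ s, p.IsRoot x)
    (hcard : p.natDegree ≤ s.card) {x : R} (hx : p.IsRoot x) : x ∈ s := by
  classical
  by_contra hxs
  have hsub : (insert x s).val ⊆ p.roots := fun y hy => by
    rw [mem_roots hp]
    rcases Finset.mem_insert.1 hy with rfl | hy
    exacts [hx, hs y hy]
  have := card_le_degree_of_subset_roots hsub
  rw [Finset.card_insert_of_notMem hxs] at this
  omega

noncomputable def earthMapQuartic : ℝ[X] :=
  C 49 * X ^ 4 + C (16 - 18 * √2) * X ^ 3 + C (48 - 54 * √2) * X ^ 2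
    + C (52 - 34 * √2) * X + C (43 - 30 * √2)

theorem earthMapQuartic_eval (t : ℝ) :
    earthMapQuartic.eval t = 49 * t ^ 4 + (16 - 18 * √2) * t ^ 3
      + (48 - 54 * √2) * t ^ 2 + (52 - 34 * √2) * t + (43 - 30 * √2) := by
  simp [earthMapQuartic]

theorem earthMapQuartic_natDegree : earthMapQuartic.natDegree = 4 := by
  unfold earthMapQuartic
  compute_degree!

theorem earthMapQuartic_ne_zero : earthMapQuartic ≠ 0 :=
  ne_zero_of_natDegree_gt (n := 0) (by rw [earthMapQuartic_natDegree]; norm_num)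

theorem sqrt_two_mem_Ioo : √2 ∈ Set.Ioo 1.41421 1.41422 := by
  have h := Real.sq_sqrt (show (0 : ℝ) ≤ 2 by norm_num)
  constructor <;> nlinarith [Real.sqrt_nonneg 2]

theorem earthMapQuartic_sign_changes :
    earthMapQuartic.eval (-1) * earthMapQuartic.eval (-0.5) < 0 ∧
    earthMapQuartic.eval (-0.5) * earthMapQuartic.eval 0 < 0 ∧
    earthMapQuartic.eval 0 * earthMapQuartic.eval 0.5 < 0 ∧
    earthMapQuartic.eval 0.779 * earthMapQuartic.eval 0.780 < 0 := by
  obtain ⟨hlo, hhi⟩ := sqrt_two_mem_Ioo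
  refine ⟨mul_neg_of_pos_of_neg ?_ ?_, mul_neg_of_neg_of_pos ?_ ?_,
    mul_neg_of_pos_of_neg ?_ ?_, mul_neg_of_neg_of_pos ?_ ?_⟩ <;>
  · norm_num [earthMapQuartic_eval]
    linarith
theorem stmt_13 :
    ∃ t₁ t₂ t₃ t₄ : ℝ, t₁ < t₂ ∧ t₂ < t₃ ∧ t₃ < t₄ ∧
      (∀ t ∈ ({t₁, t₂, t₃, t₄} : Set ℝ),
        49 * t ^ 4 + (16 - 18 * Real.sqrt 2) * t ^ 3
          + (48 - 54 * Real.sqrt 2) * t ^ 2 + (52 - 34 * Real.sqrt 2) * t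
          + (43 - 30 * Real.sqrt 2) = 0) ∧
      (∀ t : ℝ, 49 * t ^ 4 + (16 - 18 * Real.sqrt 2) * t ^ 3
          + (48 - 54 * Real.sqrt 2) * t ^ 2 + (52 - 34 * Real.sqrt 2) * t
          + (43 - 30 * Real.sqrt 2) = 0 → t ∈ ({t₁, t₂, t₃, t₄} : Set ℝ)) ∧
      0.779 < t₄ ∧ t₄ < 0.780 := by
  obtain ⟨s₁, s₂, s₃, s₄⟩ := earthMapQuartic_sign_changes
  have hcont : Continuous fun t => earthMapQuartic.eval t := earthMapQuartic.continuous
  obtain ⟨t₁, ⟨h₁, h₁'⟩, hr₁⟩ := exists_mem_Ioo_eq_zero_of_mul_neg hcont (by norm_num) s₁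
  obtain ⟨t₂, ⟨h₂, h₂'⟩, hr₂⟩ := exists_mem_Ioo_eq_zero_of_mul_neg hcont (by norm_num) s₂
  obtain ⟨t₃, ⟨h₃, h₃'⟩, hr₃⟩ := exists_mem_Ioo_eq_zero_of_mul_neg hcont (by norm_num) s₃
  obtain ⟨t₄, ⟨h₄, h₄'⟩, hr₄⟩ := exists_mem_Ioo_eq_zero_of_mul_neg hcont (by norm_num) s₄
  have h₁₂ : t₁ < t₂ := by linarith
  have h₂₃ : t₂ < t₃ := by linarith
  have h₃₄ : t₃ < t₄ := by linarith [show (0.5 : ℝ) < 0.779 by norm_num]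
  have hroots : ∀ t ∈ ({t₁, t₂, t₃, t₄} : Finset ℝ), earthMapQuartic.IsRoot t := by
    simp only [Finset.mem_insert, Finset.mem_singleton]
    rintro t (rfl | rfl | rfl | rfl) <;> assumption
  have hcard : ({t₁, t₂, t₃, t₄} : Finset ℝ).card = 4 :=
    Finset.card_eq_four.2 ⟨t₁, t₂, t₃, t₄, h₁₂.ne, (h₁₂.trans h₂₃).ne,
      (h₁₂.trans (h₂₃.trans h₃₄)).ne, h₂₃.ne, (h₂₃.trans h₃₄).ne, h₃₄.ne, rfl⟩
  refine ⟨t₁, t₂, t₃, t₄, h₁₂, h₂₃, h₃₄, fun t ht => ?_, fun t ht => ?_, h₄, h₄'⟩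
  · rw [← earthMapQuartic_eval]
    exact hroots t (by simpa using ht)
  · rw [← earthMapQuartic_eval] at ht
    have := mem_of_isRoot_of_natDegree_le_card earthMapQuartic_ne_zero hroots
      (by rw [hcard, earthMapQuartic_natDegree]) ht
    simpa using this
end
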